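/- Let X ∈ ℝ^{n×d} with smallest singular value α > 0, S ⊆ [d], and y ∈ ℝⁿ. Let w(λ₀) be the Lasso minimizer, write w = w_S + w_{S̄} for its split onto coordinates in S and outside S, and let v = argmin_{v : v_i = 0 ∀ i ∈ S} (1/2)‖Xv − y‖₂² + λ₀‖v‖₁. If ‖w_S(λ₀)‖₂ ≤ ε, then ‖v − w_{S̄}(λ₀)‖₂ ≤ ‖X‖₂²·ε/α². -/
import Mathlib

noncomputable def euclNorm {d : ℕ} (v : Fin d → ℝ) : ℝ := Real.sqrt (∑ i, v i ^ 2)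

/-- The Lasso objective (1/2)‖Xw − y‖₂² + λ‖w‖₁. -/
noncomputable def lassoObj {n d : ℕ} (X : Matrix (Fin n) (Fin d) ℝ) (y : Fin n → ℝ)
    (l : ℝ) (w : Fin d → ℝ) : ℝ :=
  (1 / 2) * euclNorm (X.mulVec w - y) ^ 2 + l * ∑ i, |w i|

lemma euclNorm_nonneg {d : ℕ} (v : Fin d → ℝ) : 0 ≤ euclNorm v := Real.sqrt_nonneg _

lemma sq_euclNorm {d : ℕ} (v : Fin d → ℝ) : euclNorm v ^ 2 = ∑ i, v i ^ 2 :=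
  Real.sq_sqrt (Finset.sum_nonneg fun _ _ => sq_nonneg _)

lemma ip_le_norms {n : ℕ} (a b : Fin n → ℝ) :
    (∑ i, a i * b i) ≤ euclNorm a * euclNorm b := by
  have h := Finset.sum_mul_sq_le_sq_mul_sq Finset.univ a b
  calc (∑ i, a i * b i) ≤ |∑ i, a i * b i| := le_abs_self _
    _ = Real.sqrt ((∑ i, a i * b i) ^ 2) := (Real.sqrt_sq_eq_abs _).symm
    _ ≤ Real.sqrt ((∑ i, a i ^ 2) * ∑ i, b i ^ 2) := Real.sqrt_le_sqrt h
    _ = euclNorm a * euclNorm b := by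
        rw [euclNorm, euclNorm, ← Real.sqrt_mul (Finset.sum_nonneg fun _ _ => sq_nonneg _)]

lemma abs_convex_pt (a b t : ℝ) (h0 : 0 ≤ t) (h1 : t ≤ 1) :
    |a + t * (b - a)| ≤ |a| + t * (|b| - |a|) := by
  have e : a + t * (b - a) = (1 - t) * a + t * b := by ring
  rw [e]
  calc |(1 - t) * a + t * b| ≤ |(1 - t) * a| + |t * b| := abs_add_le _ _
    _ = (1 - t) * |a| + t * |b| := by
        rw [abs_mul, abs_mul, abs_of_nonneg (by linarith), abs_of_nonneg h0]
    _ = |a| + t * (|b| - |a|) := by ring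

/-- If `z0` is a minimizer in the direction `h` (with an ℓ¹-slope bound `D`), then the
directional derivative is nonnegative. -/
lemma min_dir {n d : ℕ} (X : Matrix (Fin n) (Fin d) ℝ) (y : Fin n → ℝ) (l₀ : ℝ)
    (hl₀ : 0 < l₀) (z0 h : Fin d → ℝ) (D : ℝ)
    (hkey : ∀ t : ℝ, 0 < t → t ≤ 1 →
      lassoObj X y l₀ z0 ≤ (1 / 2) * euclNorm (X.mulVec (z0 + t • h) - y) ^ 2
        + l₀ * ((∑ i, |z0 i|) + t * D)) :
    0 ≤ (∑ i, (X.mulVec z0 - y) i * X.mulVec h i) + l₀ * D := by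
  set a : Fin n → ℝ := X.mulVec z0 - y with ha
  set c : Fin n → ℝ := X.mulVec h with hc
  set M : ℝ := ∑ i, c i ^ 2 with hM
  have hMnn : 0 ≤ M := Finset.sum_nonneg fun _ _ => sq_nonneg _
  set c0 : ℝ := (∑ i, a i * c i) + l₀ * D with hc0
  have step : ∀ t : ℝ, 0 < t → t ≤ 1 → 0 ≤ c0 + t / 2 * M := by
    intro t ht0 ht1
    have hk := hkey t ht0 ht1
    have e1 : X.mulVec (z0 + t • h) - y = fun i => a i + t * c i := by
      funext i
      simp only [Pi.sub_apply, Matrix.mulVec_add, Matrix.mulVec_smul, Pi.add_apply,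
        Pi.smul_apply, smul_eq_mul, ha, hc]
      ring
    have e2 : euclNorm (X.mulVec (z0 + t • h) - y) ^ 2
        = (∑ i, a i ^ 2) + 2 * t * (∑ i, a i * c i) + t ^ 2 * M := by
      rw [e1, sq_euclNorm, hM, Finset.mul_sum, Finset.mul_sum, ← Finset.sum_add_distrib,
        ← Finset.sum_add_distrib]
      exact Finset.sum_congr rfl fun i _ => by ring
    have e3 : lassoObj X y l₀ z0 = (1 / 2) * (∑ i, a i ^ 2) + l₀ * ∑ i, |z0 i| := by
      rw [lassoObj, sq_euclNorm, ha]
    rw [e2, e3] at hk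
    have : 0 ≤ t * (c0 + t / 2 * M) := by rw [hc0]; nlinarith
    nlinarith
  by_contra hcon
  push_neg at hcon
  have ht0 : 0 < min 1 (-c0 / (M + 1)) := by
    apply lt_min one_pos
    apply div_pos (by linarith) (by linarith)
  have hs := step _ ht0 (min_le_left _ _)
  have h2 : min 1 (-c0 / (M + 1)) ≤ -c0 / (M + 1) := min_le_right _ _
  have h3 : min 1 (-c0 / (M + 1)) / 2 * M ≤ (-c0 / (M + 1)) * M := by
    have : 0 ≤ -c0 / (M + 1) := le_of_lt (div_pos (by linarith) (by linarith))
    nlinarith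
  have h4 : (-c0 / (M + 1)) * M < -c0 := by
    rw [div_mul_eq_mul_div, div_lt_iff₀ (by linarith)]
    nlinarith
  linarith

/-- coupling the Lasso solution with the S-constrained solution. -/
theorem stmt_15 {n d : ℕ} (X : Matrix (Fin n) (Fin d) ℝ) (y : Fin n → ℝ) (α B ε : ℝ)
    (hα : 0 < α) (hmin : ∀ z : Fin d → ℝ, α * euclNorm z ≤ euclNorm (X.mulVec z))
    (hBop : ∀ z : Fin d → ℝ, euclNorm (X.mulVec z) ≤ B * euclNorm z)
    (S : Finset (Fin d)) (l₀ : ℝ) (hl₀ : 0 < l₀)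
    (w : Fin d → ℝ)
    (hw : ∀ z : Fin d → ℝ, lassoObj X y l₀ w ≤ lassoObj X y l₀ z)
    (wS wSc : Fin d → ℝ)
    (hwS : wS = fun i => if i ∈ S then w i else 0)
    (hwSc : wSc = w - wS)
    (v : Fin d → ℝ) (hvK : ∀ i ∈ S, v i = 0)
    (hv : ∀ z : Fin d → ℝ, (∀ i ∈ S, z i = 0) → lassoObj X y l₀ v ≤ lassoObj X y l₀ z)
    (hε : euclNorm wS ≤ ε) :
    euclNorm (v - wSc) ≤ B ^ 2 * ε / α ^ 2 := by
  have hε0 : 0 ≤ ε := le_trans (euclNorm_nonneg wS) hε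
  -- basic coordinate facts
  have hScZero : ∀ i ∈ S, wSc i = 0 := by
    intro i hi; rw [hwSc, hwS]; simp [hi]
  have hScOff : ∀ i, i ∉ S → wSc i = w i := by
    intro i hi; rw [hwSc, hwS]; simp [hi]
  have hwdecomp : w = wS + wSc := by
    funext i; rw [hwSc]; simp
  set h : Fin d → ℝ := v - wSc with hh
  -- First directional inequality: v minimizes over K, direction wSc - v
  have c1 : 0 ≤ (∑ i, (X.mulVec v - y) i * X.mulVec (wSc - v) i)
      + l₀ * ((∑ i, |wSc i|) - ∑ i, |v i|) := by
    apply min_dir X y l₀ hl₀ v (wSc - v) _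
    intro t ht0 ht1
    have hzK : ∀ i ∈ S, (v + t • (wSc - v)) i = 0 := by
      intro i hi
      simp [hvK i hi, hScZero i hi]
    have hb := hv _ hzK
    refine le_trans hb ?_
    rw [lassoObj]
    have habs : (∑ i, |(v + t • (wSc - v)) i|)
        ≤ (∑ i, |v i|) + t * ((∑ i, |wSc i|) - ∑ i, |v i|) := by
      calc (∑ i, |(v + t • (wSc - v)) i|)
          ≤ ∑ i, (|v i| + t * (|wSc i| - |v i|)) := by
            apply Finset.sum_le_sum
            intro i _
            simpa using abs_convex_pt (v i) (wSc i) t ht0.le ht1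
        _ = (∑ i, |v i|) + t * ((∑ i, |wSc i|) - ∑ i, |v i|) := by
            rw [Finset.sum_add_distrib, ← Finset.mul_sum, Finset.sum_sub_distrib]
    nlinarith [habs]
  -- Second directional inequality: w minimizes globally, direction v - wSc
  have c2 : 0 ≤ (∑ i, (X.mulVec w - y) i * X.mulVec (v - wSc) i)
      + l₀ * ((∑ i, |v i|) - ∑ i, |wSc i|) := by
    apply min_dir X y l₀ hl₀ w (v - wSc) _
    intro t ht0 ht1
    have hb := hw (w + t • (v - wSc))
    refine le_trans hb ?_
    rw [lassoObj]
    have habs : (∑ i, |(w + t • (v - wSc)) i|)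
        ≤ (∑ i, |w i|) + t * ((∑ i, |v i|) - ∑ i, |wSc i|) := by
      calc (∑ i, |(w + t • (v - wSc)) i|)
          ≤ ∑ i, (|w i| + t * (|v i| - |wSc i|)) := by
            apply Finset.sum_le_sum
            intro i _
            by_cases hi : i ∈ S
            · have h1 : v i = 0 := hvK i hi
              have h2 : wSc i = 0 := hScZero i hi
              simp [h1, h2]
            · have h2 : wSc i = w i := hScOff i hi
              have h3 := abs_convex_pt (w i) (v i) t ht0.le ht1
              simpa [h2] using h3
        _ = (∑ i, |w i|) + t * ((∑ i, |v i|) - ∑ i, |wSc i|) := by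
            rw [Finset.sum_add_distrib, ← Finset.mul_sum, Finset.sum_sub_distrib]
    nlinarith [habs]
  -- Combine: M ≤ ⟨X wS, X h⟩
  set p : Fin n → ℝ := X.mulVec h with hp
  set M : ℝ := ∑ i, p i ^ 2 with hM
  have keyM : M ≤ ∑ i, X.mulVec wS i * p i := by
    have hid : ((∑ i, (X.mulVec v - y) i * X.mulVec (wSc - v) i)
        + l₀ * ((∑ i, |wSc i|) - ∑ i, |v i|))
        + ((∑ i, (X.mulVec w - y) i * X.mulVec (v - wSc) i)
        + l₀ * ((∑ i, |v i|) - ∑ i, |wSc i|))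
        = (∑ i, X.mulVec wS i * p i) - M := by
      have e : (∑ i, (X.mulVec v - y) i * X.mulVec (wSc - v) i)
          + (∑ i, (X.mulVec w - y) i * X.mulVec (v - wSc) i)
          = (∑ i, X.mulVec wS i * p i) - ∑ i, p i ^ 2 := by
        rw [← Finset.sum_add_distrib, ← Finset.sum_sub_distrib]
        apply Finset.sum_congr rfl
        intro i _
        have ew : X.mulVec w i = X.mulVec wS i + X.mulVec wSc i := by
          rw [hwdecomp, Matrix.mulVec_add]; simp
        have e1 : X.mulVec (wSc - v) i = X.mulVec wSc i - X.mulVec v i := by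
          rw [Matrix.mulVec_sub]; simp
        have e2 : X.mulVec (v - wSc) i = X.mulVec v i - X.mulVec wSc i := by
          rw [Matrix.mulVec_sub]; simp
        have e3 : p i = X.mulVec v i - X.mulVec wSc i := by
          rw [hp, hh, Matrix.mulVec_sub]; simp
        simp only [Pi.sub_apply, ew, e1, e2, e3]
        ring
      rw [hM]
      linarith [e]
    linarith [c1, c2, hid.symm.le]
  -- Cauchy–Schwarz and operator bounds
  set r : ℝ := euclNorm h with hr
  have hrnn : 0 ≤ r := euclNorm_nonneg _
  rcases eq_or_lt_of_le hrnn with hr0 | hr0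
  · rw [← hr0]; positivity
  · have hXh1 : α * r ≤ euclNorm (X.mulVec h) := hmin h
    have hXh2 : euclNorm (X.mulVec h) ≤ B * r := hBop h
    have hB : 0 < B := by
      have : α * r ≤ B * r := le_trans hXh1 hXh2
      nlinarith
    have hMsq : M = euclNorm (X.mulVec h) ^ 2 := by rw [sq_euclNorm, hM, hp]
    have hCS : (∑ i, X.mulVec wS i * p i) ≤ euclNorm (X.mulVec wS) * euclNorm (X.mulVec h) := by
      rw [hp]; exact ip_le_norms _ _
    have hXwS : euclNorm (X.mulVec wS) ≤ B * ε := le_trans (hBop wS) (by nlinarith)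
    have hXhnn : 0 ≤ euclNorm (X.mulVec h) := euclNorm_nonneg _
    have s1 : α ^ 2 * r ^ 2 ≤ M := by
      rw [hMsq]
      nlinarith [hXh1, mul_nonneg hα.le hrnn]
    have s2 : euclNorm (X.mulVec wS) * euclNorm (X.mulVec h) ≤ (B * ε) * (B * r) :=
      mul_le_mul hXwS hXh2 hXhnn (by positivity)
    have hchain : α ^ 2 * r ^ 2 ≤ (B * ε) * (B * r) := by linarith
    rw [le_div_iff₀ (by positivity : (0:ℝ) < α ^ 2)]
    nlinarith [hchain, hr0]
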